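/- Let n ≥ 2, let Σ' = {a, b, #}, and let L_Moore be the language accepted by the n-state Moore automaton (viewed as a language of words over the letters a, b). Let L be a language of words over {a,b} with L ≠ {a,b}*, and define L' = { x ++ [#] ++ y | x ∈ {a,b}*, y ∈ L_Moore } ∪ { x ++ [#] ++ y | x ∈ L, y ∈ {a,b}* } over Σ'. Then every complete DFA over Σ' accepting L' has at least 2^n states. -/

import Mathlib

/-!
Fix a word `x₀` over `{a, b}` outside `L`. For `y` over `{a, b}`, `x₀ # y ∈ L'` exactly when the
Moore automaton accepts `y`, so the left quotient of `L'` by `x₀ # u`, restricted to `{a, b}*`, is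
the language accepted from the set of states that `u` reaches. All `2 ^ n` sets of states are
reached from the start state: each nonempty set other than `{1}` is the image, under one letter, of
a set of smaller weight. Distinct sets are told apart by words `b^k` or `b^(n-1) a^(n-1)` that are
accepted from exactly one state. So `L'` has at least `2 ^ n` left quotients, and a DFA has at least
as many states as its language has left quotients.
-/

/-- The three-letter alphabet `{a, b, #}` (`hash` denotes `#`). -/
inductive ABH : Type
  | a : ABH
  | b : ABH
  | hash : ABH
deriving DecidableEq

instance instFintypeABH : Fintype ABH :=
  ⟨{ABH.a, ABH.b, ABH.hash}, fun x => by cases x <;> simp⟩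

/-- The `n`-state Moore automaton, viewed over the alphabet `{a,b,#}` (the symbol `#`
labels no transition, so the accepted language consists of words over `{a,b}` only).
States `{1, …, n}` are represented by `Fin n` (`q : Fin n` stands for state `q.val + 1`).
Transitions: `1 —b→ 1`, `1 —a→ 2`, `i —a→ i+1` and `i —b→ i+1` for `2 ≤ i ≤ n-1`, and
`n —a→ 1`, `n —a→ 2`.  Start state `1`, accepting state `n`. -/
def mooreNFA (n : ℕ) : NFA ABH (Fin n) where
  step q x :=
    { p | (q.val = 0 ∧ x = ABH.b ∧ p.val = 0) ∨
          (q.val = 0 ∧ x = ABH.a ∧ p.val = 1) ∨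
          (1 ≤ q.val ∧ q.val + 1 ≤ n - 1 ∧ (x = ABH.a ∨ x = ABH.b) ∧ p.val = q.val + 1) ∨
          (q.val = n - 1 ∧ x = ABH.a ∧ (p.val = 0 ∨ p.val = 1)) }
  start := { q | q.val = 0 }
  accept := { q | q.val = n - 1 }

theorem NFA.evalFrom_empty {α σ : Type*} (M : NFA α σ) (x : List α) : M.evalFrom ∅ x = ∅ := by
  induction x with
  | nil => rfl
  | cons a x ih => rw [NFA.evalFrom_cons, NFA.stepSet_empty, ih]

theorem NFA.mem_acceptsFrom_iff_exists_singleton {α σ : Type*} {M : NFA α σ} {S : Set σ}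
    {x : List α} : x ∈ M.acceptsFrom S ↔ ∃ t ∈ S, x ∈ M.acceptsFrom {t} := by
  simp only [NFA.mem_acceptsFrom, NFA.mem_evalFrom_iff_exists (S := S)]
  exact ⟨fun ⟨s, hs, t, ht, h⟩ => ⟨t, ht, s, hs, h⟩, fun ⟨t, ht, s, hs, h⟩ => ⟨s, hs, t, ht, h⟩⟩

theorem DFA.card_le_of_injective_leftQuotient {α σ ι : Type*} [Fintype σ] [Fintype ι]
    (M : DFA α σ) {f : ι → List α} (hf : Function.Injective (M.accepts.leftQuotient ∘ f)) :
    Fintype.card ι ≤ Fintype.card σ := by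
  rw [Language.leftQuotient_accepts, Function.comp_assoc] at hf
  exact Fintype.card_le_of_injective _ hf.of_comp

def shiftDown (F : Finset ℕ) : Finset ℕ := (F.erase 0).image (· - 1)

theorem mem_shiftDown {F : Finset ℕ} {x : ℕ} : x ∈ shiftDown F ↔ x + 1 ∈ F := by
  simp only [shiftDown, Finset.mem_image, Finset.mem_erase]
  constructor
  · rintro ⟨y, ⟨hy0, hy⟩, rfl⟩
    rwa [Nat.sub_add_cancel (Nat.one_le_iff_ne_zero.2 hy0)]
  · exact fun h => ⟨x + 1, ⟨by omega, h⟩, rfl⟩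

theorem lt_of_mem_shiftDown {n : ℕ} {F : Finset ℕ} (hF : ∀ x ∈ F, x < n) {x : ℕ}
    (hx : x ∈ shiftDown F) : x < n :=
  Nat.lt_of_succ_lt (hF _ (mem_shiftDown.1 hx))

section Moore

variable {n : ℕ}

theorem mooreNFA_stepSet_a (P : ℕ → Prop) :
    (mooreNFA n).stepSet {p | P p.val} ABH.a =
      {p | (1 ≤ p.val ∧ P (p.val - 1)) ∨ (p.val ≤ 1 ∧ P (n - 1))} := by
  ext p
  have := p.isLt
  simp only [mooreNFA, Order.add_one_le_iff, NFA.mem_stepSet, Set.mem_ofPred_eq, reduceCtorEq,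
    false_and, and_false, true_and, or_false, false_or, Fin.exists_iff, exists_and_left,
    exists_prop]
  constructor
  · rintro ⟨i, hPi, hi, ⟨rfl, hp⟩ | ⟨-, -, hp⟩ | ⟨rfl, hp⟩⟩
    · exact Or.inl ⟨by omega, by rwa [hp]⟩
    · exact Or.inl ⟨by omega, by rwa [hp, Nat.add_sub_cancel]⟩
    · exact Or.inr ⟨by omega, hPi⟩
  · rintro (⟨hp, hP⟩ | ⟨hp, hP⟩)
    · exact ⟨_, hP, by omega, by omega⟩
    · exact ⟨_, hP, by omega, by omega⟩

theorem mooreNFA_stepSet_b (P : ℕ → Prop) :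
    (mooreNFA n).stepSet {p | P p.val} ABH.b =
      {p | (2 ≤ p.val ∧ P (p.val - 1)) ∨ (p.val = 0 ∧ P 0)} := by
  ext p
  have := p.isLt
  simp only [mooreNFA, Order.add_one_le_iff, NFA.mem_stepSet, Set.mem_ofPred_eq, true_and,
    reduceCtorEq, false_and, and_false, or_true, or_false, false_or, Fin.exists_iff,
    exists_and_left, exists_prop]
  constructor
  · rintro ⟨i, hPi, hi, ⟨rfl, hp⟩ | ⟨hi1, -, hp⟩⟩
    · exact Or.inr ⟨hp, hPi⟩
    · exact Or.inl ⟨by omega, by rwa [hp, Nat.add_sub_cancel]⟩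
  · rintro (⟨hp, hP⟩ | ⟨hp, hP⟩)
    · exact ⟨_, hP, by omega, by omega⟩
    · exact ⟨_, hP, by omega, by omega⟩

theorem mooreNFA_evalFrom_replicate_a {k j : ℕ} (h : k + j < n) :
    (mooreNFA n).evalFrom {p | p.val = k} (List.replicate j ABH.a) = {p | p.val = k + j} := by
  induction j with
  | zero => rfl
  | succ j ih =>
    rw [List.replicate_succ', NFA.evalFrom_append, NFA.evalFrom_singleton, ih (by omega),
      mooreNFA_stepSet_a (· = k + j)]
    ext p
    simp only [Set.mem_ofPred_eq]
    omega

theorem mooreNFA_evalFrom_replicate_b {k : ℕ} (hk : 1 ≤ k) (j : ℕ) :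
    (mooreNFA n).evalFrom {p | p.val = k} (List.replicate j ABH.b) = {p | p.val = k + j} := by
  induction j with
  | zero => rfl
  | succ j ih =>
    rw [List.replicate_succ', NFA.evalFrom_append, NFA.evalFrom_singleton, ih,
      mooreNFA_stepSet_b (· = k + j)]
    ext p
    simp only [Set.mem_ofPred_eq]
    omega

theorem mooreNFA_evalFrom_zero_replicate_b (j : ℕ) :
    (mooreNFA n).evalFrom {p | p.val = 0} (List.replicate j ABH.b) = {p | p.val = 0} := by
  induction j with
  | zero => rfl
  | succ j ih =>
    rw [List.replicate_succ', NFA.evalFrom_append, NFA.evalFrom_singleton, ih,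
      mooreNFA_stepSet_b (· = 0)]
    ext p
    simp only [Set.mem_ofPred_eq, and_true]
    omega

theorem mooreNFA_mem_acceptsFrom_iff_of_evalFrom_eq {S : Set (Fin n)} {z : List ABH} {m : ℕ}
    (hn : 0 < n) (h : (mooreNFA n).evalFrom S z = {p | p.val = m}) :
    z ∈ (mooreNFA n).acceptsFrom S ↔ m = n - 1 := by
  rw [NFA.mem_acceptsFrom, h]
  simp only [mooreNFA, Set.mem_ofPred_eq]
  exact ⟨fun ⟨p, hp, hpm⟩ => hpm ▸ hp, fun hm => ⟨⟨n - 1, by omega⟩, rfl, hm.symm⟩⟩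

/-- From state `k`, the word `b^(n-1-i)` reaches the accepting state exactly when `k = i ≥ 1`
(state `0` is stuck under `b`); `b^(n-1)` keeps only state `0`, which `a^(n-1)` then accepts. -/
def mooreSeparatingWord (n i : ℕ) : List ABH :=
  if i = 0 then List.replicate (n - 1) ABH.b ++ List.replicate (n - 1) ABH.a
  else List.replicate (n - 1 - i) ABH.b

theorem mooreSeparatingWord_mem_acceptsFrom_iff (hn : 2 ≤ n) {i k : ℕ} (hi : i < n) (hk : k < n) :
    mooreSeparatingWord n i ∈ (mooreNFA n).acceptsFrom {p | p.val = k} ↔ k = i := by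
  unfold mooreSeparatingWord
  split_ifs with hi0
  · rw [NFA.append_mem_acceptsFrom]
    rcases Nat.eq_zero_or_pos k with rfl | hk0
    · rw [mooreNFA_evalFrom_zero_replicate_b,
        mooreNFA_mem_acceptsFrom_iff_of_evalFrom_eq (m := 0 + (n - 1)) (by omega)
          (mooreNFA_evalFrom_replicate_a (by omega))]
      omega
    · have hempty : {p : Fin n | p.val = k + (n - 1)} = ∅ :=
        Set.eq_empty_of_forall_notMem fun p (hp : p.val = _) => by omega
      rw [mooreNFA_evalFrom_replicate_b hk0, hempty, NFA.mem_acceptsFrom,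
        NFA.evalFrom_empty]
      simp only [Set.mem_empty_iff_false, and_false, exists_false, false_iff]
      omega
  · rcases Nat.eq_zero_or_pos k with rfl | hk0
    · rw [mooreNFA_mem_acceptsFrom_iff_of_evalFrom_eq (by omega)
        (mooreNFA_evalFrom_zero_replicate_b _)]
      omega
    · rw [mooreNFA_mem_acceptsFrom_iff_of_evalFrom_eq (by omega)
        (mooreNFA_evalFrom_replicate_b hk0 _)]
      omega

theorem mooreSeparatingWord_mem_acceptsFrom (hn : 2 ≤ n) (q : Fin n) (S : Set (Fin n)) :
    mooreSeparatingWord n q ∈ (mooreNFA n).acceptsFrom S ↔ q ∈ S := by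
  have hsingleton (p : Fin n) : ({p} : Set (Fin n)) = {r | r.val = p.val} :=
    Set.ext fun _ => Fin.ext_iff
  rw [NFA.mem_acceptsFrom_iff_exists_singleton]
  simp only [hsingleton]
  constructor
  · rintro ⟨p, hp, hacc⟩
    rwa [Fin.ext ((mooreSeparatingWord_mem_acceptsFrom_iff hn q.isLt p.isLt).1 hacc)] at hp
  · exact fun hq => ⟨q, hq, (mooreSeparatingWord_mem_acceptsFrom_iff hn q.isLt q.isLt).2 rfl⟩

theorem mooreNFA_eq_of_acceptsFrom (hn : 2 ≤ n) {S S' : Set (Fin n)}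
    (h : ∀ z, (∀ c ∈ z, c ≠ ABH.hash) →
      (z ∈ (mooreNFA n).acceptsFrom S ↔ z ∈ (mooreNFA n).acceptsFrom S')) : S = S' := by
  ext q
  rw [← mooreSeparatingWord_mem_acceptsFrom hn q, ← mooreSeparatingWord_mem_acceptsFrom hn q]
  refine h _ fun c hc => ?_
  unfold mooreSeparatingWord at hc
  split_ifs at hc <;> simp only [List.mem_append, List.mem_replicate] at hc <;> grind

theorem mooreNFA_stepSet_a_shiftDown {F : Finset ℕ} (hF : ∀ x ∈ F, x < n) (h0 : 0 ∉ F) :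
    (mooreNFA n).stepSet {p | p.val ∈ shiftDown F} ABH.a = {p | p.val ∈ F} := by
  ext ⟨p, hp⟩
  rw [mooreNFA_stepSet_a (· ∈ shiftDown F)]
  have hnF : n - 1 + 1 ∉ F := fun h => by have := hF _ h; omega
  rcases p with _ | p <;> simp [mem_shiftDown, h0, hnF]

theorem mooreNFA_stepSet_b_insert_zero {F : Finset ℕ} (h0 : 0 ∈ F) (h1 : 1 ∉ F) :
    (mooreNFA n).stepSet {p | p.val ∈ insert 0 (shiftDown F)} ABH.b = {p | p.val ∈ F} := by
  ext ⟨p, hp⟩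
  rw [mooreNFA_stepSet_b (· ∈ insert 0 (shiftDown F))]
  rcases p with _ | _ | p <;> simp [mem_shiftDown, h0, h1]

theorem mooreNFA_stepSet_a_insert_last {F : Finset ℕ} (h0 : 0 ∈ F) (h1 : 1 ∈ F) :
    (mooreNFA n).stepSet {p | p.val ∈ insert (n - 1) ((shiftDown F).erase 0)} ABH.a =
      {p | p.val ∈ F} := by
  ext ⟨p, hp⟩
  rw [mooreNFA_stepSet_a (· ∈ insert (n - 1) ((shiftDown F).erase 0))]
  rcases p with _ | _ | p <;> simp [mem_shiftDown, h0, h1]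
  omega

/-- Each of the three predecessor steps above lowers this weight; the summand `n` per index is
what pays for trading the indices `0, 1` for `n - 1` in `mooreNFA_stepSet_a_insert_last`. -/
def mooreWeight (n : ℕ) (F : Finset ℕ) : ℕ := ∑ x ∈ F, (n + x)

theorem mooreWeight_shiftDown_add_card (F : Finset ℕ) :
    mooreWeight n (shiftDown F) + (F.erase 0).card = mooreWeight n (F.erase 0) := by
  rw [mooreWeight, shiftDown, Finset.sum_image, mooreWeight, Finset.card_eq_sum_ones,
    ← Finset.sum_add_distrib]
  · refine Finset.sum_congr rfl fun x hx => ?_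
    have := (Finset.mem_erase.1 hx).1
    omega
  · intro x hx y hy hxy
    have := (Finset.mem_erase.1 hx).1
    have := (Finset.mem_erase.1 hy).1
    simp only at hxy
    omega

theorem mooreWeight_insert {F : Finset ℕ} {x : ℕ} (hx : x ∉ F) :
    mooreWeight n (insert x F) = n + x + mooreWeight n F :=
  Finset.sum_insert hx

theorem mooreWeight_erase {F : Finset ℕ} {x : ℕ} (hx : x ∈ F) :
    n + x + mooreWeight n (F.erase x) = mooreWeight n F :=
  Finset.add_sum_erase F _ hx

theorem mooreWeight_shiftDown_lt {F : Finset ℕ} (hne : F.Nonempty) (h0 : 0 ∉ F) :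
    mooreWeight n (shiftDown F) < mooreWeight n F := by
  have := mooreWeight_shiftDown_add_card (n := n) F
  rw [Finset.erase_eq_of_notMem h0] at this
  have := hne.card_pos
  omega

theorem mooreWeight_insert_zero_shiftDown_lt {F : Finset ℕ} (h0 : 0 ∈ F) (h1 : 1 ∉ F)
    (hF0 : F ≠ {0}) : mooreWeight n (insert 0 (shiftDown F)) < mooreWeight n F := by
  have hpos : 0 < (F.erase 0).card :=
    Finset.card_pos.2 ((Finset.erase_nonempty h0).2 ((Finset.nontrivial_iff_ne_singleton h0).2 hF0))
  rw [mooreWeight_insert (by rwa [mem_shiftDown]), ← mooreWeight_erase h0,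
    ← mooreWeight_shiftDown_add_card]
  omega

theorem mooreWeight_insert_last_lt {F : Finset ℕ} (hF : ∀ x ∈ F, x < n) (h0 : 0 ∈ F)
    (h1 : 1 ∈ F) :
    mooreWeight n (insert (n - 1) ((shiftDown F).erase 0)) < mooreWeight n F := by
  have hpos : 0 < (F.erase 0).card := Finset.card_pos.2 ⟨1, Finset.mem_erase.2 ⟨one_ne_zero, h1⟩⟩
  have hlast : n - 1 ∉ (shiftDown F).erase 0 := fun h => by
    have := hF _ (mem_shiftDown.1 (Finset.mem_of_mem_erase h))
    omega
  rw [mooreWeight_insert hlast, ← mooreWeight_erase h0, ← mooreWeight_shiftDown_add_card F,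
    ← mooreWeight_erase (mem_shiftDown.2 h1)]
  omega

theorem mooreNFA_exists_eval_eq_indices (hn : 2 ≤ n) (F : Finset ℕ) (hF : ∀ x ∈ F, x < n) :
    ∃ u : List ABH, (∀ c ∈ u, c ≠ ABH.hash) ∧ (mooreNFA n).eval u = {p | p.val ∈ F} := by
  induction hw : mooreWeight n F using Nat.strong_induction_on generalizing F with
  | _ w ih =>
  have extend {T : Finset ℕ} {c : ABH} (hc : c ≠ ABH.hash) (hT : ∀ x ∈ T, x < n)
      (hlt : mooreWeight n T < mooreWeight n F)
      (hstep : (mooreNFA n).stepSet {p | p.val ∈ T} c = {p | p.val ∈ F}) :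
      ∃ u : List ABH, (∀ c ∈ u, c ≠ ABH.hash) ∧ (mooreNFA n).eval u = {p | p.val ∈ F} := by
    obtain ⟨u, hu, hev⟩ := ih _ (hw ▸ hlt) T hT rfl
    refine ⟨u ++ [c], fun c' hc' => ?_, by rw [NFA.eval_append_singleton, hev, hstep]⟩
    rcases List.mem_append.1 hc' with h | h
    · exact hu c' h
    · rwa [List.mem_singleton.1 h]
  by_cases h0 : 0 ∈ F
  · by_cases h1 : 1 ∈ F
    · refine extend (by decide) (fun x hx => ?_) (mooreWeight_insert_last_lt hF h0 h1)
        (mooreNFA_stepSet_a_insert_last h0 h1)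
      rcases Finset.mem_insert.1 hx with rfl | hx
      · omega
      · exact lt_of_mem_shiftDown hF (Finset.mem_of_mem_erase hx)
    · rcases eq_or_ne F {0} with rfl | hF0
      · exact ⟨[], by simp, by ext; simp [NFA.eval_nil, mooreNFA]⟩
      · refine extend (by decide) (fun x hx => ?_) (mooreWeight_insert_zero_shiftDown_lt h0 h1 hF0)
          (mooreNFA_stepSet_b_insert_zero h0 h1)
        rcases Finset.mem_insert.1 hx with rfl | hx
        · omega
        · exact lt_of_mem_shiftDown hF hx
  · rcases F.eq_empty_or_nonempty with rfl | hne
    · refine ⟨List.replicate 1 ABH.a ++ List.replicate (n - 1) ABH.b, by simp, ?_⟩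
      change (mooreNFA n).evalFrom {p | p.val = 0} _ = _
      rw [NFA.evalFrom_append, mooreNFA_evalFrom_replicate_a (by omega),
        mooreNFA_evalFrom_replicate_b le_rfl]
      ext p
      simp only [Set.mem_ofPred_eq, Finset.notMem_empty, iff_false]
      omega
    · exact extend (by decide) (fun x => lt_of_mem_shiftDown hF) (mooreWeight_shiftDown_lt hne h0)
        (mooreNFA_stepSet_a_shiftDown hF h0)

theorem mooreNFA_exists_eval_eq (hn : 2 ≤ n) (S : Set (Fin n)) :
    ∃ u : List ABH, (∀ c ∈ u, c ≠ ABH.hash) ∧ (mooreNFA n).eval u = S := by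
  classical
  obtain ⟨u, hu, hev⟩ :=
    mooreNFA_exists_eval_eq_indices hn (S.toFinset.map Fin.valEmbedding) (by simp)
  refine ⟨u, hu, hev.trans ?_⟩
  ext p
  simp [Fin.val_inj]

end Moore

def hashUnion (K L : Language ABH) : Language ABH :=
  ({ w | ∃ x y : List ABH, (∀ c ∈ x, c ≠ ABH.hash) ∧ y ∈ K ∧ w = x ++ [ABH.hash] ++ y } ∪
    { w | ∃ x y : List ABH, x ∈ L ∧ (∀ c ∈ y, c ≠ ABH.hash) ∧ w = x ++ [ABH.hash] ++ y } :
    Set (List ABH))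

theorem append_hash_append_mem_hashUnion_iff {K L : Language ABH} {x y : List ABH}
    (hx : ∀ c ∈ x, c ≠ ABH.hash) (hxL : x ∉ L) (hy : ∀ c ∈ y, c ≠ ABH.hash) :
    x ++ [ABH.hash] ++ y ∈ hashUnion K L ↔ y ∈ K := by
  have split {x' y' : List ABH} (h : x ++ [ABH.hash] ++ y = x' ++ [ABH.hash] ++ y') :
      x = x' ∧ y = y' := by
    simp only [List.append_assoc, List.singleton_append] at h
    obtain ⟨hx', -, hy'⟩ :=
      (List.append_cons_inj_of_notMem (fun h => hx _ h rfl) (fun h => hy _ h rfl)).1 h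
    exact ⟨hx', hy'⟩
  constructor
  · rintro (⟨x', y', -, hy', h⟩ | ⟨x', y', hx', -, h⟩)
    · rwa [(split h).2]
    · exact absurd ((split h).1 ▸ hx') hxL
  · exact fun hy' => Or.inl ⟨x, y, hx, hy', rfl⟩

theorem mem_leftQuotient_hashUnion_iff {σ : Type*} {M : NFA ABH σ} {L : Language ABH}
    {x u z : List ABH} (hx : ∀ c ∈ x, c ≠ ABH.hash) (hxL : x ∉ L) (hu : ∀ c ∈ u, c ≠ ABH.hash)
    (hz : ∀ c ∈ z, c ≠ ABH.hash) :
    z ∈ (hashUnion M.accepts L).leftQuotient (x ++ [ABH.hash] ++ u) ↔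
      z ∈ M.acceptsFrom (M.eval u) := by
  rw [Language.mem_leftQuotient, List.append_assoc (x ++ _)]
  refine (append_hash_append_mem_hashUnion_iff hx hxL (by grind)).trans ?_
  rw [NFA.accepts_eq_acceptsFrom_start, NFA.append_mem_acceptsFrom]
  rfl

/-- let `L_Moore` be the language of the `n`-state Moore automaton
(`n ≥ 2`) and let `L` be a language of words over `{a,b}` (no `#`) with
`L ≠ {a,b}*`.  Then every complete DFA over `{a,b,#}` accepting
`L' = {a,b}* # L_Moore ∪ L # {a,b}*` has at least `2^n` states. -/
theorem union_language_state_complexity_blowup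
    (n : ℕ) (hn : 2 ≤ n) (L : Language ABH)
    (hL : ∀ w ∈ L, ∀ c ∈ w, c ≠ ABH.hash)
    (hLne : L ≠ { w : List ABH | ∀ c ∈ w, c ≠ ABH.hash }) :
    ∀ (Q : Type) [Fintype Q] (D : DFA ABH Q),
      D.accepts =
        ({ w | ∃ x y : List ABH, (∀ c ∈ x, c ≠ ABH.hash) ∧
              y ∈ (mooreNFA n).accepts ∧ w = x ++ [ABH.hash] ++ y } ∪
         { w | ∃ x y : List ABH, x ∈ L ∧ (∀ c ∈ y, c ≠ ABH.hash) ∧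
              w = x ++ [ABH.hash] ++ y }) →
      2 ^ n ≤ Fintype.card Q := by
  intro Q _ D hD
  obtain ⟨x₀, hx₀, hx₀L⟩ : ∃ x₀ : List ABH, (∀ c ∈ x₀, c ≠ ABH.hash) ∧ x₀ ∉ L := by
    by_contra! h
    exact hLne (Set.Subset.antisymm hL h)
  choose u hu hev using mooreNFA_exists_eval_eq hn
  have hquot (S : Set (Fin n)) (z : List ABH) (hz : ∀ c ∈ z, c ≠ ABH.hash) :
      z ∈ D.accepts.leftQuotient (x₀ ++ [ABH.hash] ++ u S) ↔ z ∈ (mooreNFA n).acceptsFrom S := by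
    have h := mem_leftQuotient_hashUnion_iff (M := mooreNFA n) hx₀ hx₀L (hu S) hz
    rwa [hev, show hashUnion (mooreNFA n).accepts L = D.accepts from hD.symm] at h
  calc 2 ^ n = Fintype.card (Set (Fin n)) := by simp
    _ ≤ Fintype.card Q := D.card_le_of_injective_leftQuotient fun S S' h =>
        mooreNFA_eq_of_acceptsFrom hn fun z hz => by
          rw [← hquot S z hz, ← hquot S' z hz]
          exact Iff.of_eq (congrArg (z ∈ ·) h)
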